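/- arXiv:2208.09186 — 2 statements merged into one kernel-verified Lean document; each statement's English description precedes it below -/
import Mathlib

section
/- Let P ∈ ℝ[X], let Q be a *ℝ-deformation of P, and set Ξ := Q − P ∈ ℝ*[X]. Let u ∈ ℝ with P(u) = 0 and P'(u) ≠ 0, and let ξ ∈ ℝ* be a root of Q with st ξ = u and ξ ≠ u. Then Ξ(u) ≠ 0 and the quotient (ξ − u)·P'(u)/Ξ(u) has standard part −1; equivalently, ξ − u = −(Ξ(u)/P'(u))·(1 + η) for some infinitesimal η ∈ ℝ*. -/
/-! Dividing by `X - u`, every polynomial `f` satisfies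
`f(ξ) - f(u) = (ξ - u) · (f /ₘ (X - u))(ξ)`. Adding this for `P` and `Ξ` and using `Q(ξ) = 0`,
`P(u) = 0` gives `Ξ(u) = -(ξ - u) · W` with `W = (P /ₘ (X - u))(ξ) + (Ξ /ₘ (X - u))(ξ)`.
The first summand has standard part `(P /ₘ (X - u))(u) = P'(u)`; by synthetic division
`Ξ /ₘ (X - u)` again has infinitesimal coefficients, so the second summand is infinitesimal.
Hence `st W = P'(u) ≠ 0`, and the three claims follow by dividing by `W`. -/

open Hyperreal Polynomial

noncomputable def realToHyper : ℝ →+* ℝ* :=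
  (Filter.Germ.coeRingHom _).comp (Pi.constRingHom ℕ ℝ)

set_option linter.deprecated false

@[simp]
theorem realToHyper_apply (r : ℝ) : realToHyper r = (r : ℝ*) := rfl

namespace Polynomial

variable {R : Type*} [CommRing R]

theorem eval_sub_eval_eq_mul_eval_divByMonic (p : R[X]) (x a : R) :
    p.eval x - p.eval a = (x - a) * (p /ₘ (X - C a)).eval x := by
  have h := congrArg (eval x) (X_sub_C_mul_divByMonic_eq_sub_modByMonic p a)
  simpa [modByMonic_X_sub_C_eq_C_eval] using h.symm

theorem eval_divByMonic_X_sub_C_self (p : R[X]) (a : R) :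
    (p /ₘ (X - C a)).eval a = (derivative p).eval a := by
  have h := congrArg (eval a) (divByMonic_add_X_sub_C_mul_derivative_divByMonic_eq_derivative p a)
  simpa using h

end Polynomial

namespace Hyperreal

theorem IsSt.pow {x : ℝ*} {r : ℝ} (h : IsSt x r) : ∀ n : ℕ, IsSt (x ^ n) (r ^ n)
  | 0 => by simpa using isSt_refl_real 1
  | n + 1 => by simpa only [pow_succ] using (h.pow n).mul h

theorem IsSt.sum {ι : Type*} {s : Finset ι} {f : ι → ℝ*} {g : ι → ℝ} (h : ∀ i, IsSt (f i) (g i)) :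
    IsSt (∑ i ∈ s, f i) (∑ i ∈ s, g i) :=
  Finset.sum_hom_rel (by simpa using isSt_refl_real 0) fun i _ _ hb => by
    simpa using (h i).add hb

theorem IsSt.eval {p : ℝ*[X]} {q : ℝ[X]} (hpq : ∀ i, IsSt (p.coeff i) (q.coeff i))
    {x : ℝ*} {r : ℝ} (hx : IsSt x r) : IsSt (p.eval x) (q.eval r) := by
  have hp : p.natDegree < max p.natDegree q.natDegree + 1 := by omega
  have hq : q.natDegree < max p.natDegree q.natDegree + 1 := by omega
  rw [eval_eq_sum_range' hp, eval_eq_sum_range' hq]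
  exact IsSt.sum fun i => (hpq i).mul (hx.pow i)

theorem infinitesimal_coeff_divByMonic_X_sub_C {p : ℝ*[X]} (hp : ∀ i, Infinitesimal (p.coeff i))
    {a : ℝ*} {r : ℝ} (ha : IsSt a r) (i : ℕ) :
    Infinitesimal ((p /ₘ (X - C a)).coeff i) := by
  rw [Infinitesimal, coeff_divByMonic_X_sub_C]
  simpa using IsSt.sum (s := Finset.Icc (i + 1) p.natDegree)
    fun n => (ha.pow (n - (i + 1))).mul (hp n)

theorem IsSt.first_order_of_eq_neg_mul {a b W : ℝ*} {c : ℝ} (hW : IsSt W c) (hc : c ≠ 0)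
    (ha : a ≠ 0) (hb : b = -(a * W)) :
    b ≠ 0 ∧ IsSt (a * c / b) (-1) ∧ ∃ η : ℝ*, Infinitesimal η ∧ a = -(b / c) * (1 + η) := by
  have hW_ne : ¬Infinitesimal W := fun h => hc (hW.unique h)
  have hW0 : W ≠ 0 := by
    rintro rfl
    exact hW_ne (isSt_refl_real 0)
  have hq : IsSt (c * W⁻¹) 1 := by
    simpa [hc] using (isSt_refl_real c).mul (hW.inv hW_ne)
  subst hb
  refine ⟨by simp [ha, hW0], ?_, c * W⁻¹ - 1, ?_, ?_⟩
  · convert hq.neg using 1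
    field_simp
  · simpa [Infinitesimal] using hq.sub (isSt_refl_real 1)
  · have hc' : (c : ℝ*) ≠ 0 := by exact_mod_cast hc
    field_simp
    ring

end Hyperreal

theorem simple_root_first_order_general (P : Polynomial ℝ) (Q : Polynomial ℝ*)
    (hdef : ∀ i, Infinitesimal ((Q - P.map realToHyper).coeff i))
    (u : ℝ) (hu : P.eval u = 0) (hu' : (derivative P).eval u ≠ 0)
    (ξ : ℝ*) (hst : IsSt ξ u) (hroot : Q.eval ξ = 0) (hne : ξ ≠ (u : ℝ*)) :
    (Q - P.map realToHyper).eval (u : ℝ*) ≠ 0 ∧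
    IsSt ((ξ - (u : ℝ*)) * (((derivative P).eval u : ℝ) : ℝ*) /
      (Q - P.map realToHyper).eval (u : ℝ*)) (-1) ∧
    ∃ η : ℝ*, Infinitesimal η ∧
      ξ - (u : ℝ*) = -((Q - P.map realToHyper).eval (u : ℝ*) /
        (((derivative P).eval u : ℝ) : ℝ*)) * (1 + η) := by
  set Pstar := P.map realToHyper
  set Ξ := Q - Pstar
  have hPstar_u : Pstar.eval (u : ℝ*) = 0 := by
    simpa [Pstar, hu] using eval_map_apply realToHyper (p := P) u
  have hW : IsSt ((Pstar /ₘ (X - C (u : ℝ*))).eval ξ + (Ξ /ₘ (X - C (u : ℝ*))).eval ξ)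
      ((derivative P).eval u) := by
    have hPstar_quot : IsSt ((Pstar /ₘ (X - C (u : ℝ*))).eval ξ) ((derivative P).eval u) := by
      have hmap : Pstar /ₘ (X - C (u : ℝ*)) = (P /ₘ (X - C u)).map realToHyper := by
        simp [Pstar, map_divByMonic realToHyper (monic_X_sub_C u)]
      rw [hmap, ← eval_divByMonic_X_sub_C_self]
      exact IsSt.eval (fun i => by simpa using isSt_refl_real _) hst
    have hΞ_quot : IsSt ((Ξ /ₘ (X - C (u : ℝ*))).eval ξ) 0 := by
      simpa using IsSt.eval (q := 0)
        (infinitesimal_coeff_divByMonic_X_sub_C hdef (isSt_refl_real u)) hst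
    simpa using hPstar_quot.add hΞ_quot
  refine hW.first_order_of_eq_neg_mul hu' (sub_ne_zero.mpr hne) ?_
  have hQ : Q.eval ξ = Pstar.eval ξ + Ξ.eval ξ := by simp [Ξ]
  linear_combination -(eval_sub_eval_eq_mul_eval_divByMonic Pstar ξ u) -
    eval_sub_eval_eq_mul_eval_divByMonic Ξ ξ u + hroot - hQ - hPstar_u

/-- If `Q` is a `*ℝ`-deformation of `P`, `Ξ = Q - P`, `u` is a simple root of `P` and
`ξ ≠ u` is a root of `Q` with standard part `u`, then `Ξ(u) ≠ 0` and
`st ((ξ - u)·P'(u)/Ξ(u)) = -1`; equivalently `ξ - u = -(Ξ(u)/P'(u))(1 + η)` with `η`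
infinitesimal. -/
theorem simple_root_first_order (P : Polynomial ℝ) (Q : Polynomial ℝ*)
    (hdeg : Q.natDegree = P.natDegree)
    (hdef : ∀ i, Infinitesimal ((Q - P.map realToHyper).coeff i))
    (u : ℝ) (hu : P.eval u = 0) (hu' : (derivative P).eval u ≠ 0)
    (ξ : ℝ*) (hst : IsSt ξ u) (hroot : Q.eval ξ = 0) (hne : ξ ≠ (u : ℝ*)) :
    (Q - P.map realToHyper).eval (u : ℝ*) ≠ 0 ∧
    IsSt ((ξ - (u : ℝ*)) * (((derivative P).eval u : ℝ) : ℝ*) /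
      (Q - P.map realToHyper).eval (u : ℝ*)) (-1) ∧
    ∃ η : ℝ*, Infinitesimal η ∧
      ξ - (u : ℝ*) = -((Q - P.map realToHyper).eval (u : ℝ*) /
        (((derivative P).eval u : ℝ) : ℝ*)) * (1 + η) :=
  simple_root_first_order_general P Q hdef u hu hu' ξ hst hroot hne
end

section
/- Let P ∈ ℝ[X] be of degree n ≥ 1 and let Q = P + Ξ be a *ℝ-deformation of P, where Ξ = ε₀ + ε₁X + ⋯ + εₙXⁿ has all coefficients infinitesimal. Suppose (ε₀,…,εₙ) = α₀·U₀ + α₀α₁·U₁ + ⋯ + (α₀α₁⋯α_m)·U_m, where α₀,…,α_m ∈ ℝ* are nonzero infinitesimals and U₀,…,U_m are linearly independent vectors of ℝ^{n+1}; write Uᵢ(X) for the real polynomial whose coefficient vector is Uᵢ. Let u ∈ ℝ be a root of P of multiplicity k (P^{(i)}(u) = 0 for i < k, P^{(k)}(u) ≠ 0), let j₀ ≤ m be an index such that Uᵢ(u) = 0 for all i < j₀ and U_{j₀}(u) ≠ 0, and let ξ ∈ ℝ* be a nonzero infinitesimal with Q(u + ξ) = 0. Assume moreover that for every 1 ≤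 i ≤ n the quantity ξⁱ·Ξ^{(i)}(u)/(i!·Ξ(u)) is infinitesimal (where Ξ^{(i)} is the i-th derivative of Ξ; note Ξ(u) ≠ 0 under the stated hypotheses). Then ξ^k·P^{(k)}(u)/(k!·α₀α₁⋯α_{j₀}·U_{j₀}(u)) has standard part −1; that is, ξ^k ≈ −k!·α₀α₁⋯α_{j₀}·U_{j₀}(u)/P^{(k)}(u) up to a factor infinitely close to 1. -/
open Hyperreal Polynomial

/-- The real polynomial `v₀ + v₁ X + ⋯ + vₙ Xⁿ` associated with a vector
`v ∈ ℝ^{n+1}`. -/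
noncomputable def vecPoly {n : ℕ} (v : Fin (n + 1) → ℝ) : Polynomial ℝ :=
  ∑ j : Fin (n + 1), Polynomial.C (v j) * Polynomial.X ^ (j : ℕ)

/-! Since the Hasse derivatives of `P` below order `k` vanish at `u`, `P(u + ξ) = ξ ^ k * D`
with `D ≈ P⁽ᵏ⁾(u) / k!`. The smallness hypothesis says that every non-constant term of the
Taylor expansion `Ξ(u + ξ) = ∑ Ξ⁽ⁱ⁾(u) ξ ^ i / i!` is infinitesimal relative to `Ξ(u)`, so
`Ξ(u + ξ) / Ξ(u) ≈ 1`; and in `Ξ(u) = ∑ᵢ α₀⋯αᵢ Uᵢ(u)` the `j₀`-th term dominates, since the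
earlier ones vanish and the later ones carry extra infinitesimal factors. Now `Q(u + ξ) = 0`
reads `ξ ^ k * D = -Ξ(u + ξ)`, and dividing through gives the claim. -/

-- The theorem is stated with `IsSt` and `Infinitesimal`, which Mathlib has deprecated.
set_option linter.deprecated false

open scoped Nat

namespace Hyperreal

theorem isSt_sum {ι : Type*} {s : Finset ι} {f : ι → ℝ*} {r : ι → ℝ}
    (h : ∀ i ∈ s, IsSt (f i) (r i)) : IsSt (∑ i ∈ s, f i) (∑ i ∈ s, r i) := by
  classical
  induction s using Finset.induction with
  | empty => simpa using isSt_refl_real 0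
  | insert i s hi ih =>
    rw [Finset.sum_insert hi, Finset.sum_insert hi]
    exact (h i (s.mem_insert_self i)).add (ih fun j hj ↦ h j (Finset.mem_insert_of_mem hj))

theorem isSt_prod {ι : Type*} {s : Finset ι} {f : ι → ℝ*} {r : ι → ℝ}
    (h : ∀ i ∈ s, IsSt (f i) (r i)) : IsSt (∏ i ∈ s, f i) (∏ i ∈ s, r i) := by
  classical
  induction s using Finset.induction with
  | empty => simpa using isSt_refl_real 1
  | insert i s hi ih =>
    rw [Finset.prod_insert hi, Finset.prod_insert hi]
    exact (h i (s.mem_insert_self i)).mul (ih fun j hj ↦ h j (Finset.mem_insert_of_mem hj))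

theorem IsSt.ne_zero {x : ℝ*} {r : ℝ} (hx : IsSt x r) (hr : r ≠ 0) : x ≠ 0 := by
  rintro rfl
  exact hr (hx.unique (isSt_refl_real 0))

theorem IsSt.isSt_div_self {x : ℝ*} {r : ℝ} (hx : IsSt x r) (hr : r ≠ 0) : IsSt (r / x) 1 := by
  have hinv : IsSt x⁻¹ r⁻¹ := hx.inv fun h0 ↦ hr (hx.unique h0)
  simpa [div_eq_mul_inv, hr] using (isSt_refl_real r).mul hinv

end Hyperreal

@[simp]
theorem realToHyper_apply_s9 (x : ℝ) : realToHyper x = x := rfl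

theorem isSt_eval_map_realToHyper (p : ℝ[X]) {x : ℝ*} {r : ℝ} (hx : IsSt x r) :
    IsSt ((p.map realToHyper).eval x) (p.eval r) := by
  induction p using Polynomial.induction_on with
  | C a => simpa using isSt_refl_real a
  | add p q hp hq => simpa using hp.add hq
  | monomial n a ih => simpa [pow_succ, ← mul_assoc] using ih.mul hx

theorem eval_iterate_derivative_eq_factorial_mul {R : Type*} [CommSemiring R] (p : R[X])
    (i : ℕ) (r : R) : (derivative^[i] p).eval r = i ! * (hasseDeriv i p).eval r := by
  rw [← factorial_smul_hasseDeriv]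
  simp [nsmul_eq_mul]

theorem eval_add_eq_sum_range_hasseDeriv {R : Type*} [CommSemiring R] {p : R[X]} {N : ℕ}
    (hN : p.natDegree < N) (r x : R) :
    p.eval (r + x) = ∑ i ∈ Finset.range N, (hasseDeriv i p).eval r * x ^ i := by
  rw [add_comm, ← taylor_eval, eval_eq_sum_range' ((natDegree_taylor p r).symm ▸ hN)]
  simp only [taylor_coeff]

theorem exists_eval_add_eq_pow_mul_isSt_hasseDeriv (P : ℝ[X]) {u : ℝ} {k : ℕ}
    (hP : ∀ i < k, (hasseDeriv i P).eval u = 0) {ξ : ℝ*} (hξ : IsSt ξ 0) :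
    ∃ D, (P.map realToHyper).eval (u + ξ) = ξ ^ k * D ∧ IsSt D ((hasseDeriv k P).eval u) := by
  obtain ⟨S, hS⟩ : X ^ k ∣ taylor u P :=
    X_pow_dvd_iff.2 fun d hd ↦ by rw [taylor_coeff, hP d hd]
  refine ⟨(S.map realToHyper).eval ξ, ?_, ?_⟩
  · rw [add_comm, ← realToHyper_apply_s9, ← taylor_eval, ← map_taylor, hS]
    simp
  · have hcoeff : (hasseDeriv k P).eval u = S.eval 0 := by
      rw [← taylor_coeff, hS, coeff_X_pow_mul', if_pos le_rfl, Nat.sub_self,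
        coeff_zero_eq_eval_zero]
    rw [hcoeff]
    exact isSt_eval_map_realToHyper S hξ

theorem isSt_eval_add_div_eval {p : ℝ*[X]} {n : ℕ} (hp : p.natDegree ≤ n) {r ξ : ℝ*}
    (hr : p.eval r ≠ 0)
    (hsmall : ∀ i, 1 ≤ i → i ≤ n →
      IsSt (ξ ^ i * (derivative^[i] p).eval r / ((i ! : ℝ*) * p.eval r)) 0) :
    IsSt (p.eval (r + ξ) / p.eval r) 1 := by
  rw [eval_add_eq_sum_range_hasseDeriv (Nat.lt_succ_of_le hp), Finset.sum_div,
    Finset.sum_range_succ']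
  have htail := Hyperreal.isSt_sum (s := Finset.range n) (r := fun _ ↦ 0) fun i hi ↦ by
    have h := hsmall (i + 1) (Nat.le_add_left 1 i) (Finset.mem_range.1 hi)
    rwa [eval_iterate_derivative_eq_factorial_mul, mul_left_comm, mul_div_mul_left _ _
      (Nat.cast_ne_zero.2 (Nat.factorial_ne_zero _)), mul_comm] at h
  simpa [hr] using htail.add (isSt_refl_real 1)

theorem eval_eq_sum_mul_eval_vecPoly {n : ℕ} {ι : Type*} [Fintype ι] {p : ℝ*[X]}
    (hp : p.natDegree ≤ n) {c : ι → ℝ*} {U : ι → Fin (n + 1) → ℝ}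
    (hcoeff : ∀ j : Fin (n + 1), p.coeff j = ∑ i, c i * (U i j : ℝ*)) (u : ℝ) :
    p.eval (u : ℝ*) = ∑ i, c i * (((vecPoly (U i)).eval u : ℝ) : ℝ*) := by
  rw [eval_eq_sum_range' (Nat.lt_succ_of_le hp), ← Fin.sum_univ_eq_sum_range]
  simp only [hcoeff, vecPoly, eval_finset_sum, ← realToHyper_apply_s9, map_sum, eval_mul, eval_C,
    eval_pow, eval_X, map_mul, map_pow, Finset.sum_mul, Finset.mul_sum]
  exact Finset.sum_comm.trans
    (Finset.sum_congr rfl fun _ _ ↦ Finset.sum_congr rfl fun _ _ ↦ by ring)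

section GozeFlag

variable {ι : Type*} [LinearOrder ι] [LocallyFiniteOrderBot ι] {α : ι → ℝ*}

theorem isSt_prod_Iic_div_prod_Iic_of_lt (hα0 : ∀ l, α l ≠ 0) (hα : ∀ l, IsSt (α l) 0)
    {i j : ι} (hji : j < i) :
    IsSt ((∏ l ∈ Finset.Iic i, α l) / ∏ l ∈ Finset.Iic j, α l) 0 := by
  classical
  rw [← Finset.prod_sdiff (Finset.Iic_subset_Iic.2 hji.le),
    mul_div_cancel_right₀ _ (Finset.prod_ne_zero_iff.2 fun l _ ↦ hα0 l)]
  have hi : i ∈ Finset.Iic i \ Finset.Iic j := by simp [hji.not_ge]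
  have h := Hyperreal.isSt_prod (s := Finset.Iic i \ Finset.Iic j) (r := fun _ ↦ 0) fun l _ ↦ hα l
  rwa [Finset.prod_eq_zero (f := fun _ ↦ (0 : ℝ)) hi rfl] at h

theorem isSt_sum_prod_Iic_mul_div [Fintype ι] (hα0 : ∀ l, α l ≠ 0) (hα : ∀ l, IsSt (α l) 0)
    {v : ι → ℝ} {j₀ : ι} (hprev : ∀ i < j₀, v i = 0) (hj₀ : v j₀ ≠ 0) :
    IsSt ((∑ i, (∏ l ∈ Finset.Iic i, α l) * (v i : ℝ*)) /
      ((∏ l ∈ Finset.Iic j₀, α l) * (v j₀ : ℝ*))) 1 := by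
  have hA : ∏ l ∈ Finset.Iic j₀, α l ≠ 0 := Finset.prod_ne_zero_iff.2 fun l _ ↦ hα0 l
  have hW : (v j₀ : ℝ*) ≠ 0 := coe_ne_zero.2 hj₀
  rw [Finset.sum_div]
  simpa using Hyperreal.isSt_sum (s := Finset.univ) (r := fun i ↦ if i = j₀ then 1 else 0)
    fun i _ ↦ by
      rcases lt_trichotomy i j₀ with hlt | rfl | hgt
      · simpa [hprev i hlt, hlt.ne] using isSt_refl_real 0
      · simpa [div_self (mul_ne_zero hA hW)] using isSt_refl_real 1
      · have hterm : (∏ l ∈ Finset.Iic i, α l) * (v i : ℝ*) /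
            ((∏ l ∈ Finset.Iic j₀, α l) * (v j₀ : ℝ*)) =
            (∏ l ∈ Finset.Iic i, α l) / (∏ l ∈ Finset.Iic j₀, α l) * ((v i / v j₀ : ℝ) : ℝ*) := by
          rw [coe_div]
          field_simp
        simpa [hterm, hgt.ne'] using
          (isSt_prod_Iic_div_prod_Iic_of_lt hα0 hα hgt).mul (isSt_refl_real (v i / v j₀))

end GozeFlag

theorem root_estimate_goze_general (P : Polynomial ℝ) (n : ℕ)
    (Ξ : Polynomial ℝ*) (Q : Polynomial ℝ*)
    (hQ : Q = P.map realToHyper + Ξ)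
    (hΞdeg : Ξ.natDegree ≤ n)
    (m : ℕ) (α : Fin (m + 1) → ℝ*) (U : Fin (m + 1) → (Fin (n + 1) → ℝ))
    (hα : ∀ i, Infinitesimal (α i) ∧ α i ≠ 0)
    (hdecomp : ∀ j : Fin (n + 1),
      Ξ.coeff (j : ℕ) = ∑ i : Fin (m + 1), (∏ l ∈ Finset.Iic i, α l) * ((U i j : ℝ) : ℝ*))
    (u : ℝ) (k : ℕ)
    (hmult : ∀ i < k, (derivative^[i] P).eval u = 0)
    (hk : (derivative^[k] P).eval u ≠ 0)
    (j₀ : Fin (m + 1))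
    (hj₀prev : ∀ i < j₀, (vecPoly (U i)).eval u = 0)
    (hj₀ : (vecPoly (U j₀)).eval u ≠ 0)
    (ξ : ℝ*) (hξ : Infinitesimal ξ)
    (hroot : Q.eval ((u : ℝ*) + ξ) = 0)
    (hsmall : ∀ i, 1 ≤ i → i ≤ n →
      Infinitesimal (ξ ^ i * (derivative^[i] Ξ).eval (u : ℝ*) /
        ((Nat.factorial i : ℝ*) * Ξ.eval (u : ℝ*)))) :
    IsSt (ξ ^ k * (((derivative^[k] P).eval u : ℝ) : ℝ*) /
      ((Nat.factorial k : ℝ*) * (∏ l ∈ Finset.Iic j₀, α l) *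
        (((vecPoly (U j₀)).eval u : ℝ) : ℝ*))) (-1) := by
  set A := ∏ l ∈ Finset.Iic j₀, α l
  set W : ℝ := (vecPoly (U j₀)).eval u
  set c : ℝ := (hasseDeriv k P).eval u
  have hfac : ∀ i, (i ! : ℝ) ≠ 0 := fun i ↦ Nat.cast_ne_zero.2 (Nat.factorial_ne_zero i)
  have hc : c ≠ 0 := by
    simpa [eval_iterate_derivative_eq_factorial_mul, hfac] using hk
  obtain ⟨D, hPξ, hD⟩ := exists_eval_add_eq_pow_mul_isSt_hasseDeriv P
    (fun i hi ↦ by simpa [eval_iterate_derivative_eq_factorial_mul, hfac] using hmult i hi) hξ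
  have hlead : IsSt (Ξ.eval (u : ℝ*) / (A * W)) 1 := by
    rw [eval_eq_sum_mul_eval_vecPoly hΞdeg hdecomp]
    exact isSt_sum_prod_Iic_mul_div (fun l ↦ (hα l).2) (fun l ↦ (hα l).1) hj₀prev hj₀
  have hΞu : Ξ.eval (u : ℝ*) ≠ 0 := (div_ne_zero_iff.1 (hlead.ne_zero one_ne_zero)).1
  have hΞξ := isSt_eval_add_div_eval hΞdeg hΞu hsmall
  have hsum : ξ ^ k * D = -Ξ.eval (u + ξ) := by
    rw [← hPξ, eq_neg_iff_add_eq_zero, ← hroot, hQ, eval_add]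
  have hA : A ≠ 0 := Finset.prod_ne_zero_iff.2 fun l _ ↦ (hα l).2
  have key : ξ ^ k * (((derivative^[k] P).eval u : ℝ) : ℝ*) / ((k ! : ℝ*) * A * W) =
      -(Ξ.eval (u + ξ) / Ξ.eval (u : ℝ*) * (Ξ.eval (u : ℝ*) / (A * W)) * (c / D)) := by
    rw [eval_iterate_derivative_eq_factorial_mul, ← realToHyper_apply_s9, map_mul, map_natCast,
      realToHyper_apply_s9]
    have hW : (W : ℝ*) ≠ 0 := coe_ne_zero.2 hj₀
    have hD0 := hD.ne_zero hc
    field_simp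
    linear_combination (c : ℝ*) * hsum
  rw [key]
  simpa using ((hΞξ.mul hlead).mul (hD.isSt_div_self hc)).neg

/-- First-order estimate for a root of a `*ℝ`-deformation `Q = P + Ξ` near a root `u`
of multiplicity `k` of `P`, in terms of the Goze decomposition
`(ε₀,…,εₙ) = α₀U₀ + α₀α₁U₁ + ⋯` of the coefficient vector of `Ξ`:
`ξ^k ≈ -k!·α₀⋯α_{j₀}·U_{j₀}(u)/P⁽ᵏ⁾(u)`. -/
theorem root_estimate_goze (P : Polynomial ℝ) (n : ℕ) (hdeg : P.natDegree = n)
    (hn : 1 ≤ n) (Ξ : Polynomial ℝ*) (Q : Polynomial ℝ*)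
    (hQ : Q = P.map realToHyper + Ξ) (hQdeg : Q.natDegree = n)
    (hΞdeg : Ξ.natDegree ≤ n) (hΞ : ∀ i, Infinitesimal (Ξ.coeff i))
    (m : ℕ) (α : Fin (m + 1) → ℝ*) (U : Fin (m + 1) → (Fin (n + 1) → ℝ))
    (hα : ∀ i, Infinitesimal (α i) ∧ α i ≠ 0)
    (hUli : LinearIndependent ℝ U)
    (hdecomp : ∀ j : Fin (n + 1),
      Ξ.coeff (j : ℕ) = ∑ i : Fin (m + 1), (∏ l ∈ Finset.Iic i, α l) * ((U i j : ℝ) : ℝ*))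
    (u : ℝ) (k : ℕ)
    (hmult : ∀ i < k, (derivative^[i] P).eval u = 0)
    (hk : (derivative^[k] P).eval u ≠ 0)
    (j₀ : Fin (m + 1))
    (hj₀prev : ∀ i < j₀, (vecPoly (U i)).eval u = 0)
    (hj₀ : (vecPoly (U j₀)).eval u ≠ 0)
    (ξ : ℝ*) (hξ0 : ξ ≠ 0) (hξ : Infinitesimal ξ)
    (hroot : Q.eval ((u : ℝ*) + ξ) = 0)
    (hsmall : ∀ i, 1 ≤ i → i ≤ n →
      Infinitesimal (ξ ^ i * (derivative^[i] Ξ).eval (u : ℝ*) /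
        ((Nat.factorial i : ℝ*) * Ξ.eval (u : ℝ*)))) :
    IsSt (ξ ^ k * (((derivative^[k] P).eval u : ℝ) : ℝ*) /
      ((Nat.factorial k : ℝ*) * (∏ l ∈ Finset.Iic j₀, α l) *
        (((vecPoly (U j₀)).eval u : ℝ) : ℝ*))) (-1) :=
  root_estimate_goze_general P n Ξ Q hQ hΞdeg m α U hα hdecomp u k hmult hk j₀ hj₀prev hj₀ ξ hξ
    hroot hsmall
end
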